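/- Let W be a finite Weyl group acting on the real span of the simple roots α_1, …, α_l, with symmetrized Cartan matrix b_{ij} = (α_i, α_j), and let s_π = s_{π(1)} ⋯ s_{π(l)} be a Coxeter element for a permutation π ∈ S_l. Then 1 − s_π is invertible, and the matrix elements of the Cayley transform satisfy ((1+s_π)/(1−s_π) α_i, α_j) = ε^π_{ij} b_{ij}, where ε^π_{ij} = −1 if π⁻¹(i) < π⁻¹(j), 0 if i = j, and +1 if π⁻¹(i) > π⁻¹(j). -/

import Mathlib

/-!
Write the Coxeter element as `c = s₀ ∘ c'`, where `c'` is the product of the remaining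
reflections. Then `x - c x = (x - c' x) + a • v₀` with `x - c' x` in the span of the remaining
roots, so linear independence separates the two summands and both claims follow by induction
on the number of reflections: `x - c x = 0` forces `x` to be orthogonal to every root (hence
`x = 0` when the roots span), and `x - c x = v m` forces `c' x = x` or `c x = c' x` according
to whether `m` is the first index or a later one.
-/

open scoped RealInnerProductSpace

open Module Submodule

theorem Submodule.eq_and_eq_of_add_smul_eq_add_smul {K M : Type*} [DivisionRing K]
    [AddCommGroup M] [Module K M] {p : Submodule K M} {u : M} (hu : u ∉ p) {a b : K} {w w' : M}
    (hw : w ∈ p) (hw' : w' ∈ p) (h : w + a • u = w' + b • u) : w = w' ∧ a = b := by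
  have hab : a = b := by
    by_contra hab
    have : (a - b) • u ∈ p := by
      rw [show (a - b) • u = w' - w by
        rw [sub_smul, sub_eq_sub_iff_add_eq_add, add_comm, h]]
      exact sub_mem hw' hw
    exact hu ((p.smul_mem_iff (sub_ne_zero.mpr hab)).mp this)
  subst hab
  exact ⟨add_right_cancel h, rfl⟩

section

variable {V : Type*} [NormedAddCommGroup V] [InnerProductSpace ℝ V]

noncomputable def rootReflection (v x : V) : V :=
  x - ((2 * ⟪x, v⟫ / ⟪v, v⟫ : ℝ) • v)

noncomputable def reflectionProduct {n : ℕ} (v : Fin n → V) : V → V :=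
  (List.ofFn fun k => rootReflection (v k)).foldr (· ∘ ·) id

theorem sub_rootReflection (v x : V) :
    x - rootReflection v x = (2 * ⟪x, v⟫ / ⟪v, v⟫ : ℝ) • v :=
  sub_sub_cancel x _

theorem isLinearMap_rootReflection (v : V) : IsLinearMap ℝ (rootReflection v) where
  map_add x y := by
    simp only [rootReflection, inner_add_left, add_div, mul_add, add_smul]
    abel
  map_smul r x := by
    simp only [rootReflection, real_inner_smul_left, smul_sub, smul_smul, mul_left_comm,
      mul_div_assoc]

theorem reflectionProduct_zero (v : Fin 0 → V) : reflectionProduct v = id :=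
  rfl

theorem reflectionProduct_succ {n : ℕ} (v : Fin (n + 1) → V) :
    reflectionProduct v = rootReflection (v 0) ∘ reflectionProduct (Fin.tail v) := by
  simp only [reflectionProduct, List.ofFn_succ, List.foldr_cons]
  rfl

theorem isLinearMap_reflectionProduct {n : ℕ} (v : Fin n → V) :
    IsLinearMap ℝ (reflectionProduct v) := by
  induction n with
  | zero => exact (LinearMap.id : V →ₗ[ℝ] V).isLinear
  | succ n ih =>
    rw [reflectionProduct_succ]
    exact ((isLinearMap_rootReflection (v 0)).mk'.comp (ih (Fin.tail v)).mk').isLinear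

theorem sub_reflectionProduct_succ {n : ℕ} (v : Fin (n + 1) → V) (x : V) :
    x - reflectionProduct v x =
      (x - reflectionProduct (Fin.tail v) x) +
        (2 * ⟪reflectionProduct (Fin.tail v) x, v 0⟫ / ⟪v 0, v 0⟫ : ℝ) • v 0 := by
  rw [reflectionProduct_succ, Function.comp_apply, ← sub_rootReflection, sub_add_sub_cancel]

theorem sub_reflectionProduct_mem_span {n : ℕ} (v : Fin n → V) (x : V) :
    x - reflectionProduct v x ∈ span ℝ (Set.range v) := by
  induction n with
  | zero => simp [reflectionProduct_zero]
  | succ n ih =>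
    rw [sub_reflectionProduct_succ]
    exact add_mem (span_mono (Set.range_comp_subset_range Fin.succ v) (ih (Fin.tail v)))
      (smul_mem _ _ (subset_span (Set.mem_range_self 0)))

theorem inner_eq_zero_of_two_mul_inner_div_eq_zero {v y : V}
    (h : (2 * ⟪y, v⟫ / ⟪v, v⟫ : ℝ) = 0) : ⟪y, v⟫ = 0 := by
  rcases div_eq_zero_iff.mp h with h | h
  · linarith
  · rw [inner_self_eq_zero.mp h, inner_zero_right]

theorem two_mul_inner_eq_of_two_mul_inner_div_eq_one {v y : V}
    (h : (2 * ⟪y, v⟫ / ⟪v, v⟫ : ℝ) = 1) : 2 * ⟪y, v⟫ = ⟪v, v⟫ := by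
  have hv : ⟪v, v⟫ ≠ 0 := by
    rintro h0
    rw [h0, div_zero] at h
    exact zero_ne_one h
  exact (div_eq_one_iff_eq hv).mp h

/-- By linear independence, the two summands of `sub_reflectionProduct_succ` are determined by
their sum. -/
theorem sub_reflectionProduct_tail_of_sub_eq {n : ℕ} {v : Fin (n + 1) → V}
    (hv : LinearIndependent ℝ v) {x w : V} (hw : w ∈ span ℝ (Set.range (Fin.tail v)))
    {b : ℝ} (hx : x - reflectionProduct v x = w + b • v 0) :
    x - reflectionProduct (Fin.tail v) x = w ∧
      (2 * ⟪reflectionProduct (Fin.tail v) x, v 0⟫ / ⟪v 0, v 0⟫ : ℝ) = b := by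
  rw [sub_reflectionProduct_succ] at hx
  exact eq_and_eq_of_add_smul_eq_add_smul (linearIndependent_finSucc.mp hv).2
    (sub_reflectionProduct_mem_span _ x) hw hx

theorem inner_eq_zero_of_sub_reflectionProduct_eq_zero {n : ℕ} {v : Fin n → V}
    (hv : LinearIndependent ℝ v) {x : V} (hx : x - reflectionProduct v x = 0) (k : Fin n) :
    ⟪x, v k⟫ = 0 := by
  induction n with
  | zero => exact k.elim0
  | succ n ih =>
    obtain ⟨hxy, hb⟩ := sub_reflectionProduct_tail_of_sub_eq hv (zero_mem _) (b := 0)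
      (by rw [hx, zero_smul, add_zero])
    cases k using Fin.cases with
    | zero =>
      rw [← sub_eq_zero.mp hxy] at hb
      exact inner_eq_zero_of_two_mul_inner_div_eq_zero hb
    | succ k => exact ih (linearIndependent_finSucc.mp hv).1 hxy k

theorem inner_add_reflectionProduct_of_sub_eq {n : ℕ} {v : Fin n → V}
    (hv : LinearIndependent ℝ v) {x : V} {m : Fin n} (hx : x - reflectionProduct v x = v m)
    (k : Fin n) :
    ⟪x + reflectionProduct v x, v k⟫ =
      (if m = k then 0 else if m < k then -1 else 1) * ⟪v m, v k⟫ := by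
  induction n with
  | zero => exact k.elim0
  | succ n ih =>
    have hv' := (linearIndependent_finSucc.mp hv).1
    rw [reflectionProduct_succ, Function.comp_apply]
    cases m using Fin.cases with
    | zero =>
      obtain ⟨hxy, hb⟩ := sub_reflectionProduct_tail_of_sub_eq hv (zero_mem _) (b := 1)
        (by rw [hx, zero_add, one_smul])
      rw [← sub_eq_zero.mp hxy] at hb ⊢
      have hcx : rootReflection (v 0) x = x - v 0 := by
        rw [rootReflection, hb, one_smul]
      rw [hcx, inner_add_left, inner_sub_left]
      cases k using Fin.cases with
      | zero =>
        simp only [if_true]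
        linarith [two_mul_inner_eq_of_two_mul_inner_div_eq_one hb]
      | succ k =>
        simp only [(Fin.succ_ne_zero k).symm, Fin.succ_pos, if_true, if_false]
        have hxk : ⟪x, v k.succ⟫ = 0 := inner_eq_zero_of_sub_reflectionProduct_eq_zero hv' hxy k
        linarith
    | succ m =>
      obtain ⟨hxy, hb⟩ := sub_reflectionProduct_tail_of_sub_eq hv
        (subset_span (Set.mem_range_self m)) (b := 0) (by rw [hx, zero_smul, add_zero]; rfl)
      have hcx : rootReflection (v 0) (reflectionProduct (Fin.tail v) x) =
          reflectionProduct (Fin.tail v) x := by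
        rw [rootReflection, hb, zero_smul, sub_zero]
      rw [hcx]
      cases k using Fin.cases with
      | zero =>
        simp only [Fin.succ_ne_zero, (Fin.succ_pos m).not_gt, if_false, one_mul]
        set y := reflectionProduct (Fin.tail v) x
        rw [show x + y = (x - y) + (2 : ℝ) • y by module, inner_add_left, real_inner_smul_left,
          hxy, inner_eq_zero_of_two_mul_inner_div_eq_zero hb, mul_zero, add_zero]
        rfl
      | succ k =>
        simpa only [Fin.tail, Fin.succ_inj, Fin.succ_lt_succ_iff] using ih hv' hxy k

theorem bijective_sub_reflectionProduct {n : ℕ} {v : Fin n → V} (hv : LinearIndependent ℝ v)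
    (hspan : span ℝ (Set.range v) = ⊤) :
    Function.Bijective fun x => x - reflectionProduct v x := by
  let B := Basis.mk hv hspan.ge
  have : FiniteDimensional ℝ V := Module.Finite.of_basis B
  let f : V →ₗ[ℝ] V := LinearMap.id - (isLinearMap_reflectionProduct v).mk'
  have hf : Function.Injective f := by
    rw [← LinearMap.ker_eq_bot, LinearMap.ker_eq_bot']
    refine fun x hx => InnerProductSpace.ext_inner_left_basis B fun k => ?_
    rw [Basis.mk_apply, real_inner_comm, inner_zero_right]
    exact inner_eq_zero_of_sub_reflectionProduct_eq_zero hv hx k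
  exact ⟨hf, LinearMap.injective_iff_surjective.mp hf⟩

end

theorem coxeter_cayley_transform_general
    {V : Type*} [NormedAddCommGroup V] [InnerProductSpace ℝ V]
    {l : ℕ}
    (α : Fin l → V) (hind : LinearIndependent ℝ α)
    (hspan : Submodule.span ℝ (Set.range α) = ⊤)
    (π : Equiv.Perm (Fin l)) :
    -- the simple reflections
    let s : Fin l → V → V := fun i x =>
      x - ((2 * ⟪x, α i⟫ / ⟪α i, α i⟫ : ℝ) • α i)
    -- the Coxeter element s_{π(1)} ∘ ⋯ ∘ s_{π(l)}
    let c : V → V := (List.ofFn fun i => s (π i)).foldr (· ∘ ·) id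
    let ε : Fin l → Fin l → ℝ := fun i j =>
      if i = j then 0 else if π.symm i < π.symm j then -1 else 1
    Function.Bijective (fun x => x - c x) ∧
      ∀ i j : Fin l, ∀ x : V, x - c x = α i →
        ⟪x + c x, α j⟫ = ε i j * ⟪α i, α j⟫ := by
  intro s c ε
  have hc : c = reflectionProduct (α ∘ π) := rfl
  have hv : LinearIndependent ℝ (α ∘ π) := hind.comp π π.injective
  have hv_span : span ℝ (Set.range (α ∘ π)) = ⊤ := by rwa [π.surjective.range_comp]
  refine ⟨hc ▸ bijective_sub_reflectionProduct hv hv_span, fun i j x hx => ?_⟩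
  rw [hc] at hx ⊢
  simpa [ε] using
    inner_add_reflectionProduct_of_sub_eq hv (m := π.symm i) (by simpa using hx) (π.symm j)

/-- Let `α_1, …, α_l` be simple roots forming a basis of a real inner product space, with
symmetrized Cartan matrix `b_{ij} = (α_i, α_j)`, `s_i` the corresponding reflections and
`c = s_{π(1)} ⋯ s_{π(l)}` the Coxeter element attached to a permutation `π ∈ S_l`.  Then
`1 − c` is invertible, and the matrix elements of the Cayley transform satisfy
`((1+c)/(1−c) α_i, α_j) = ε^π_{ij} b_{ij}`, where `ε^π_{ij} = −1` if `π⁻¹(i) < π⁻¹(j)`,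
`0` if `i = j`, and `+1` if `π⁻¹(i) > π⁻¹(j)`. -/
theorem coxeter_cayley_transform
    {V : Type*} [NormedAddCommGroup V] [InnerProductSpace ℝ V]
    {l : ℕ} (hl : 0 < l)
    (α : Fin l → V) (hind : LinearIndependent ℝ α)
    (hspan : Submodule.span ℝ (Set.range α) = ⊤)
    (π : Equiv.Perm (Fin l)) :
    -- the simple reflections
    let s : Fin l → V → V := fun i x =>
      x - ((2 * ⟪x, α i⟫ / ⟪α i, α i⟫ : ℝ) • α i)
    -- the Coxeter element s_{π(1)} ∘ ⋯ ∘ s_{π(l)}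
    let c : V → V := (List.ofFn fun i => s (π i)).foldr (· ∘ ·) id
    let ε : Fin l → Fin l → ℝ := fun i j =>
      if i = j then 0 else if π.symm i < π.symm j then -1 else 1
    Function.Bijective (fun x => x - c x) ∧
      ∀ i j : Fin l, ∀ x : V, x - c x = α i →
        ⟪x + c x, α j⟫ = ε i j * ⟪α i, α j⟫ :=
  coxeter_cayley_transform_general α hind hspan π
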